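/- Let t ∈ ℕ and let κ be a partition of t. Then for every n ∈ ℕ, the sequence κ^{(n)} = (κ_1+1, …, κ_n+1, κ_{n+2}, κ_{n+3}, …) is weakly decreasing (hence a partition) of size |κ^{(n)}| = t + n − κ_{n+1}, and κ^{(m)} ∼_t κ^{(n)} for all m, n ∈ ℕ. (Part of Theorem 5.6 (Comes–Ostrik) of the paper: the family {κ^{(0)}, κ^{(1)}, κ^{(2)}, …} lies in a single ∼_t-equivalence class.) -/
import Mathlib


noncomputable section

/-- A partition, encoded as a weakly decreasing, eventually zero function `ℕ → ℕ`
(`lam i` is the `(i+1)`-st part `λ_{i+1}`). -/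
def IsPartitionFn (lam : ℕ → ℕ) : Prop :=
  Antitone lam ∧ ∃ N : ℕ, ∀ i : ℕ, N ≤ i → lam i = 0

/-- The size `|λ| = ∑ λ_i` of a partition. -/
def fnSize (lam : ℕ → ℕ) : ℕ := ∑ᶠ i, lam i

/-- The sequence `s_t(λ) = (t−|λ|, λ_1−1, λ_2−2, …) : ℕ → ℤ`. -/
def seqZ (t : ℤ) (lam : ℕ → ℕ) : ℕ → ℤ
  | 0 => t - (fnSize lam : ℤ)
  | i + 1 => (lam i : ℤ) - ((i : ℤ) + 1)

/-- `λ ∼_t μ` : the sequence `s_t(λ)` is a rearrangement of `s_t(μ)`. -/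
def SimZ (t : ℤ) (lam mu : ℕ → ℕ) : Prop :=
  ∀ v : ℤ, {i : ℕ | seqZ t lam i = v}.ncard = {i : ℕ | seqZ t mu i = v}.ncard

/-- `κ^{(n)} = (κ_1+1, …, κ_n+1, κ_{n+2}, κ_{n+3}, …)`: add one box to each of the first `n`
rows of the Young diagram of `κ` and delete its `(n+1)`-th row. -/
def addRemove (kap : ℕ → ℕ) (n : ℕ) : ℕ → ℕ := fun i => if i < n then kap i + 1 else kap (i + 1)

/-- The cycle `0 ↦ n, i+1 ↦ i` for `i < n`, fixing everything above `n`. -/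
def cycFun (n : ℕ) : ℕ → ℕ
  | 0 => n
  | i + 1 => if i < n then i else i + 1

lemma cycFun_bij (n : ℕ) : Function.Bijective (cycFun n) := by
  constructor
  · intro a b hab
    match a, b with
    | 0, 0 => rfl
    | 0, b + 1 => simp only [cycFun] at hab; split_ifs at hab <;> omega
    | a + 1, 0 => simp only [cycFun] at hab; split_ifs at hab <;> omega
    | a + 1, b + 1 => simp only [cycFun] at hab; split_ifs at hab <;> omega
  · intro j
    rcases eq_or_ne j n with h | h
    · exact ⟨0, by simp [cycFun, h]⟩
    · rcases lt_or_gt_of_ne h with h2 | h2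
      · exact ⟨j + 1, by simp [cycFun, h2]⟩
      · refine ⟨j, ?_⟩
        obtain ⟨k, rfl⟩ : ∃ k, j = k + 1 := ⟨j - 1, by omega⟩
        simp only [cycFun]
        rw [if_neg (by omega)]

def cycEquiv (n : ℕ) : ℕ ≃ ℕ := Equiv.ofBijective _ (cycFun_bij n)

lemma cycEquiv_apply (n i : ℕ) : cycEquiv n i = cycFun n i := rfl

/-- For `t ∈ ℕ` and `κ` a partition of `t`: each `κ^{(n)}` is weakly decreasing (hence a
partition) of size `t + n − κ_{n+1}`, and `κ^{(m)} ∼_t κ^{(n)}` for all `m, n ∈ ℕ`. -/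
theorem stmt13 (t : ℕ) (kap : ℕ → ℕ) (hk : IsPartitionFn kap) (hsum : fnSize kap = t) :
    (∀ n : ℕ, Antitone (addRemove kap n)) ∧
    (∀ n : ℕ, fnSize (addRemove kap n) = t + n - kap n) ∧
    (∀ m n : ℕ, SimZ (t : ℤ) (addRemove kap m) (addRemove kap n)) := by
  obtain ⟨hanti, N, hN⟩ := hk
  have hsupp : ∀ n : ℕ, Function.support kap ⊆ ↑(Finset.range (max n N + 1)) := by
    intro n i hi
    simp only [Finset.coe_range, Set.mem_Iio]
    by_contra h
    exact hi (hN i (by omega))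
  have hsumN : ∀ n : ℕ, ∑ i ∈ Finset.range (max n N + 1), kap i = t := by
    intro n
    rw [← hsum, fnSize, finsum_eq_sum_of_support_subset kap (hsupp n)]
  have hle : ∀ n : ℕ, kap n ≤ t := by
    intro n
    rw [← hsumN n]
    exact Finset.single_le_sum (fun i _ => Nat.zero_le _)
      (Finset.mem_range.mpr (by omega))
  -- key sum computation
  have key : ∀ n M : ℕ, n ≤ M →
      (∑ i ∈ Finset.range M, addRemove kap n i) + kap n =
        (∑ i ∈ Finset.range (M + 1), kap i) + n := by
    intro n
    refine Nat.le_induction ?_ ?_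
    · have : ∑ i ∈ Finset.range n, addRemove kap n i = (∑ i ∈ Finset.range n, kap i) + n := by
        rw [show (∑ i ∈ Finset.range n, addRemove kap n i)
            = ∑ i ∈ Finset.range n, (kap i + 1) from
          Finset.sum_congr rfl fun i hi => by
            simp [addRemove, Finset.mem_range.mp hi]]
        rw [Finset.sum_add_distrib, Finset.sum_const, smul_eq_mul, mul_one, Finset.card_range]
      rw [this, Finset.sum_range_succ]
      ring
    · intro M hM ih
      rw [Finset.sum_range_succ, Finset.sum_range_succ (n := M + 1)]
      have : addRemove kap n M = kap (M + 1) := by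
        simp [addRemove, Nat.not_lt.mpr hM]
      omega
  have hsize : ∀ n : ℕ, fnSize (addRemove kap n) = t + n - kap n := by
    intro n
    have hsupp2 : Function.support (addRemove kap n) ⊆ ↑(Finset.range (max n N)) := by
      intro i hi
      simp only [Finset.coe_range, Set.mem_Iio]
      by_contra h
      push_neg at h
      apply hi
      show addRemove kap n i = 0
      unfold addRemove
      rw [if_neg (by omega)]
      exact hN _ (by omega)
    rw [fnSize, finsum_eq_sum_of_support_subset _ hsupp2]
    have hk := key n (max n N) (le_max_left _ _)
    rw [hsumN n] at hk
    omega
  refine ⟨?_, hsize, ?_⟩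
  · intro n i j hij
    unfold addRemove
    split_ifs with h1 h2 h2
    · exact Nat.add_le_add_right (hanti hij) 1
    · omega
    · calc kap (j + 1) ≤ kap i := hanti (by omega)
        _ ≤ kap i + 1 := Nat.le_succ _
    · exact hanti (by omega)
  · have claim : ∀ (n : ℕ) (v : ℤ),
        {i : ℕ | seqZ (t : ℤ) (addRemove kap n) i = v}.ncard
          = {j : ℕ | (kap j : ℤ) - j = v}.ncard := by
      intro n v
      have hseq : ∀ i : ℕ, seqZ (t : ℤ) (addRemove kap n) i
          = (kap (cycEquiv n i) : ℤ) - (cycEquiv n i : ℤ) := by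
        intro i
        match i with
        | 0 =>
          show (t : ℤ) - (fnSize (addRemove kap n) : ℤ) = _
          rw [hsize n]
          have h1 : kap n ≤ t + n := le_trans (hle n) (Nat.le_add_right _ _)
          have h2 : ((t + n - kap n : ℕ) : ℤ) = (t : ℤ) + n - kap n := by omega
          rw [h2, show cycEquiv n 0 = n from rfl]
          ring
        | i + 1 =>
          show (addRemove kap n i : ℤ) - ((i : ℤ) + 1) = _
          by_cases h : i < n
          · have e1 : cycEquiv n (i + 1) = i := by
              rw [cycEquiv_apply]; simp [cycFun, h]
            have e2 : addRemove kap n i = kap i + 1 := by simp [addRemove, h]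
            rw [e1, e2]
            push_cast
            ring
          · have e1 : cycEquiv n (i + 1) = i + 1 := by
              rw [cycEquiv_apply]; simp [cycFun, h]
            have e2 : addRemove kap n i = kap (i + 1) := by simp [addRemove, h]
            rw [e1, e2]
            push_cast
            ring
      have hset : {i : ℕ | seqZ (t : ℤ) (addRemove kap n) i = v}
          = (cycEquiv n) ⁻¹' {j : ℕ | (kap j : ℤ) - j = v} := by
        ext i
        simp [hseq i, Set.mem_preimage]
      have himg : (cycEquiv n) ⁻¹' {j : ℕ | (kap j : ℤ) - j = v}
          = (cycEquiv n).symm '' {j : ℕ | (kap j : ℤ) - j = v} := by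
        rw [Equiv.image_eq_preimage_symm, Equiv.symm_symm]
      rw [hset, himg]
      exact Set.ncard_image_of_injective _ (cycEquiv n).symm.injective
    intro m n v
    rw [claim m v, claim n v]
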